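/- arXiv:1906.09070 — 3 statements merged into one kernel-verified Lean document; each statement's English description precedes it below -/
import Mathlib

section
/- Let W ⊆ ℝ^n × ℝ^m be open and F : W → ℝ^m be C^r with r ≥ 1. Let X ⊆ ℝ^n be a compact set such that X × {0} ⊆ W. Suppose that for all x ∈ X we have F(x,0) = 0 and the partial Jacobian matrix D₂F(x,0) (the derivative of F with respect to its second, ℝ^m-valued, argument) is invertible. Then there exist an open set U ⊆ ℝ^n containing X, a real number t > 0 with U × B_t ⊆ W, and a C^r function φ : U → B_t such that {(x,y) ∈ U × B_t : F(x,y) = 0} = {(x, φ(x)) : x ∈ U}; that is, the zero set of F in U × B_t is exactly the graph of φ. -/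
open Set Metric

lemma local_ift_aux (n m r : ℕ) (hr : 1 ≤ r)
    (W : Set ((Fin n → ℝ) × (Fin m → ℝ))) (hW : IsOpen W)
    (F : (Fin n → ℝ) × (Fin m → ℝ) → (Fin m → ℝ)) (hF : ContDiffOn ℝ r F W)
    (a : Fin n → ℝ) (haW : ((a, (0 : Fin m → ℝ)) : (Fin n → ℝ) × (Fin m → ℝ)) ∈ W)
    (ha0 : F (a, 0) = 0)
    (haD : Function.Bijective (fderiv ℝ (fun y : Fin m → ℝ => F (a, y)) 0)) :
    ∃ V : Set (Fin n → ℝ), IsOpen V ∧ a ∈ V ∧ ∃ s : ℝ, 0 < s ∧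
      V ×ˢ ball (0 : Fin m → ℝ) s ⊆ W ∧
      ∃ φ : (Fin n → ℝ) → (Fin m → ℝ), ContDiffOn ℝ r φ V ∧
        ∀ x ∈ V, ∀ y ∈ ball (0 : Fin m → ℝ) s, (F (x, y) = 0 ↔ y = φ x) := by
  have hrn : (r : WithTop ℕ∞) ≠ 0 := by exact_mod_cast (by omega : r ≠ 0)
  have hFa : ContDiffAt ℝ r F (a, 0) := hF.contDiffAt (hW.mem_nhds haW)
  have hdF : DifferentiableAt ℝ F (a, 0) := hFa.differentiableAt hrn
  set f' := fderiv ℝ F (a, 0) with hf'def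
  have hf' : HasFDerivAt F f' (a, 0) := hdF.hasFDerivAt
  -- partial derivative
  have hpart : HasFDerivAt (fun y : Fin m → ℝ => F (a, y))
      (f'.comp (ContinuousLinearMap.inr ℝ (Fin n → ℝ) (Fin m → ℝ))) 0 := by
    have h1 : HasFDerivAt (fun y : Fin m → ℝ => (a, y))
        (ContinuousLinearMap.inr ℝ (Fin n → ℝ) (Fin m → ℝ)) 0 :=
      hasFDerivAt_prodMk_right a 0
    exact hf'.comp 0 h1
  have hB : Function.Bijective
      (f'.comp (ContinuousLinearMap.inr ℝ (Fin n → ℝ) (Fin m → ℝ))) := by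
    rwa [hpart.fderiv] at haD
  -- the full derivative of G p = (p.1, F p)
  set G : (Fin n → ℝ) × (Fin m → ℝ) → (Fin n → ℝ) × (Fin m → ℝ) := fun p => (p.1, F p) with hGdef
  set G' : ((Fin n → ℝ) × (Fin m → ℝ)) →L[ℝ] ((Fin n → ℝ) × (Fin m → ℝ)) :=
    (ContinuousLinearMap.fst ℝ (Fin n → ℝ) (Fin m → ℝ)).prod f' with hG'def
  have hG'bij : Function.Bijective G' := by
    constructor
    · intro p q hpq
      have h1 : p.1 = q.1 := by
        have := congrArg Prod.fst hpq
        simpa [hG'def] using this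
      have h2 : f' p = f' q := by
        have := congrArg Prod.snd hpq
        simpa [hG'def] using this
      have hp : p = (p.1, (0 : Fin m → ℝ)) + (0, p.2) := by ext <;> simp
      have hq : q = (q.1, (0 : Fin m → ℝ)) + (0, q.2) := by ext <;> simp
      rw [hp, hq, map_add, map_add] at h2
      have h3 : f' ((0 : Fin n → ℝ), p.2) = f' ((0 : Fin n → ℝ), q.2) := by
        rw [h1] at h2; exact add_left_cancel h2
      have h4 : p.2 = q.2 := hB.injective (by simpa using h3)
      exact Prod.ext h1 h4
    · intro q
      obtain ⟨v, hv⟩ := hB.surjective (q.2 - f' (q.1, 0))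
      refine ⟨(q.1, v), ?_⟩
      have hsplit : f' (q.1, v) = f' (q.1, 0) + f' ((0 : Fin n → ℝ), v) := by
        rw [← map_add]; congr 1; ext <;> simp
      have hv' : f' ((0 : Fin n → ℝ), v) = q.2 - f' (q.1, 0) := by simpa using hv
      have hGv : G' (q.1, v) = ((q.1 : Fin n → ℝ), f' (q.1, v)) := rfl
      rw [hGv, hsplit, hv']
      refine Prod.ext rfl ?_
      simp
  set eL := (LinearEquiv.ofBijective (G'.toLinearMap) hG'bij).toContinuousLinearEquiv with heLdef
  have heL : (eL : ((Fin n → ℝ) × (Fin m → ℝ)) →L[ℝ] ((Fin n → ℝ) × (Fin m → ℝ))) = G' := by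
    ext p <;> rfl
  have hG : ContDiffAt ℝ r G (a, 0) := contDiffAt_fst.prodMk hFa
  have hG'at : HasFDerivAt G
      (eL : ((Fin n → ℝ) × (Fin m → ℝ)) →L[ℝ] ((Fin n → ℝ) × (Fin m → ℝ))) (a, 0) := by
    rw [heL]
    exact hasFDerivAt_fst.prodMk hf'
  set e := hG.toOpenPartialHomeomorph G hG'at hrn with hedef
  have hecoe : (e : (Fin n → ℝ) × (Fin m → ℝ) → (Fin n → ℝ) × (Fin m → ℝ)) = G :=
    hG.toOpenPartialHomeomorph_coe hG'at hrn
  have hsource : ((a, (0 : Fin m → ℝ)) : _ × _) ∈ e.source :=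
    hG.mem_toOpenPartialHomeomorph_source hG'at hrn
  have hGa0 : G (a, 0) = (a, 0) := by simp [hGdef, ha0]
  have htarget : ((a, (0 : Fin m → ℝ)) : _ × _) ∈ e.target := by
    have := hG.image_mem_toOpenPartialHomeomorph_target hG'at hrn
    rwa [hGa0] at this
  -- smoothness of the inverse
  have hsymm : ContDiffAt ℝ r (e.symm) (a, 0) := by
    have h := hG.to_localInverse hG'at hrn
    rw [hGa0] at h
    exact h
  -- g x = e.symm (x, 0)
  set g : (Fin n → ℝ) → (Fin n → ℝ) × (Fin m → ℝ) := fun x => e.symm (x, 0) with hgdef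
  have hgat : ContDiffAt ℝ r g a := by
    have hpair : ContDiffAt ℝ r (fun x : Fin n → ℝ => ((x, (0 : Fin m → ℝ)) : _ × _)) a :=
      contDiffAt_id.prodMk contDiffAt_const
    exact ContDiffAt.comp a hsymm hpair
  obtain ⟨u, hu, hgu⟩ := hgat.contDiffOn le_rfl (by simp)
  set V₁ := interior u with hV₁def
  have hV₁ : IsOpen V₁ := isOpen_interior
  have haV₁ : a ∈ V₁ := mem_interior_iff_mem_nhds.2 hu
  -- product neighborhood inside W ∩ e.source
  have hWs : (a, (0 : Fin m → ℝ)) ∈ W ∩ e.source := ⟨haW, hsource⟩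
  obtain ⟨P, hP, Q, hQ, hPQ⟩ := mem_nhds_prod_iff.1 ((hW.inter e.open_source).mem_nhds hWs)
  obtain ⟨σ, hσ, hσQ⟩ := Metric.mem_nhds_iff.1 hQ
  -- the set where (x,0) ∈ e.target
  set T : Set (Fin n → ℝ) := {x | ((x, (0 : Fin m → ℝ)) : _ × _) ∈ e.target} with hTdef
  have hT : IsOpen T := e.open_target.preimage (by fun_prop)
  have haT : a ∈ T := htarget
  refine ⟨interior P ∩ T ∩ V₁, (isOpen_interior.inter hT).inter hV₁,
    ⟨⟨mem_interior_iff_mem_nhds.2 hP, haT⟩, haV₁⟩, σ, hσ, ?_, fun x => (e.symm (x, 0)).2, ?_, ?_⟩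
  · rintro ⟨x, y⟩ ⟨⟨⟨hx, -⟩, -⟩, hy⟩
    exact (hPQ ⟨interior_subset hx, hσQ hy⟩).1
  · have : ContDiffOn ℝ r g V₁ := hgu.mono interior_subset
    exact (contDiff_snd.comp_contDiffOn this).mono (by intro x hx; exact hx.2)
  · rintro x ⟨⟨hxP, hxT⟩, -⟩ y hy
    have hxy : ((x, y) : _ × _) ∈ e.source := (hPQ ⟨interior_subset hxP, hσQ hy⟩).2
    constructor
    · intro h0
      have h1 : e (x, y) = (x, 0) := by
        rw [hecoe]; simp [hGdef, h0]
      have h2 : e.symm (x, 0) = (x, y) := by rw [← h1]; exact e.left_inv hxy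
      exact (congrArg Prod.snd h2).symm
    · intro hyx
      have h3 : e (e.symm (x, 0)) = ((x : Fin n → ℝ), (0 : Fin m → ℝ)) := e.right_inv hxT
      rw [hecoe] at h3
      have h4 : (e.symm ((x : Fin n → ℝ), (0 : Fin m → ℝ))).1 = x := congrArg Prod.fst h3
      have h5 : F (e.symm ((x : Fin n → ℝ), (0 : Fin m → ℝ))) = 0 := congrArg Prod.snd h3
      have h6 : (e.symm ((x : Fin n → ℝ), (0 : Fin m → ℝ))) = (x, (e.symm (x, 0)).2) :=
        Prod.ext h4 rfl
      rw [h6] at h5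
      rw [hyx]
      exact h5

/-- **Implicit function theorem extended to a compact set.**
Let `W ⊆ ℝ^n × ℝ^m` be open and `F : W → ℝ^m` be `C^r` (`r ≥ 1`). Let `X ⊆ ℝ^n` be compact
with `X × {0} ⊆ W`. Suppose for all `x ∈ X`, `F(x,0) = 0` and the partial Jacobian
`D₂F(x,0)` is invertible. Then there are an open `U ⊇ X`, `t > 0` with `U × B_t ⊆ W`, and a
`C^r` function `φ : U → B_t` whose graph is exactly the zero set of `F` in `U × B_t`. -/
theorem compact_implicit_function_theorem
    (n m r : ℕ) (hr : 1 ≤ r)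
    (W : Set ((Fin n → ℝ) × (Fin m → ℝ))) (hW : IsOpen W)
    (F : (Fin n → ℝ) × (Fin m → ℝ) → (Fin m → ℝ)) (hF : ContDiffOn ℝ r F W)
    (X : Set (Fin n → ℝ)) (hX : IsCompact X)
    (hXW : ∀ x ∈ X, ((x, (0 : Fin m → ℝ)) : (Fin n → ℝ) × (Fin m → ℝ)) ∈ W)
    (hF0 : ∀ x ∈ X, F (x, 0) = 0)
    (hD2 : ∀ x ∈ X, Function.Bijective (fderiv ℝ (fun y : Fin m → ℝ => F (x, y)) 0)) :
    ∃ U : Set (Fin n → ℝ), IsOpen U ∧ X ⊆ U ∧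
      ∃ t : ℝ, 0 < t ∧ U ×ˢ Metric.ball (0 : Fin m → ℝ) t ⊆ W ∧
        ∃ φ : (Fin n → ℝ) → (Fin m → ℝ),
          ContDiffOn ℝ r φ U ∧
          (∀ x ∈ U, φ x ∈ Metric.ball (0 : Fin m → ℝ) t) ∧
          {p : (Fin n → ℝ) × (Fin m → ℝ) |
              p ∈ U ×ˢ Metric.ball (0 : Fin m → ℝ) t ∧ F p = 0}
            = (fun x => (x, φ x)) '' U := by
  classical
  rcases X.eq_empty_or_nonempty with hXe | hXne
  · refine ⟨∅, isOpen_empty, by simp [hXe], 1, one_pos, by simp, 0, ?_, by simp, ?_⟩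
    · intro x hx; exact absurd hx (notMem_empty x)
    · ext p; simp
  · have key : ∀ a : X, ∃ V : Set (Fin n → ℝ), IsOpen V ∧ (a : Fin n → ℝ) ∈ V ∧
        ∃ s : ℝ, 0 < s ∧ V ×ˢ ball (0 : Fin m → ℝ) s ⊆ W ∧
        ∃ φ : (Fin n → ℝ) → (Fin m → ℝ), ContDiffOn ℝ r φ V ∧
          ∀ x ∈ V, ∀ y ∈ ball (0 : Fin m → ℝ) s, (F (x, y) = 0 ↔ y = φ x) :=
      fun a => local_ift_aux n m r hr W hW F hF a (hXW a a.2) (hF0 a a.2) (hD2 a a.2)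
    choose V hVopen hVmem s hs hVW φl hφl hiff using key
    have hcover : X ⊆ ⋃ a : X, V a := fun x hx => mem_iUnion.2 ⟨⟨x, hx⟩, hVmem _⟩
    obtain ⟨fs, hfs⟩ := hX.elim_finite_subcover V hVopen hcover
    have hfsne : fs.Nonempty := by
      obtain ⟨x, hx⟩ := hXne
      obtain ⟨i, hifs, -⟩ := mem_iUnion₂.1 (hfs hx)
      exact ⟨i, hifs⟩
    set t := fs.inf' hfsne s with htdef
    have ht : 0 < t := (Finset.lt_inf'_iff hfsne).2 fun i _ => hs i
    have hts : ∀ i ∈ fs, t ≤ s i := fun i hi => Finset.inf'_le s hi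
    set V' : X → Set (Fin n → ℝ) := fun i => V i ∩ φl i ⁻¹' ball (0 : Fin m → ℝ) t with hV'def
    have hV'open : ∀ i, IsOpen (V' i) := fun i =>
      (hφl i).continuousOn.isOpen_inter_preimage (hVopen i) isOpen_ball
    have hzero : ∀ i, ∀ x ∈ X, x ∈ V i → φl i x = 0 := by
      intro i x hxX hxV
      have := (hiff i x hxV 0 (mem_ball_self (hs i))).1 (hF0 x hxX)
      exact this.symm
    have hcover' : X ⊆ ⋃ i ∈ fs, V' i := by
      intro x hx
      obtain ⟨i, hifs, hxi⟩ := mem_iUnion₂.1 (hfs hx)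
      exact mem_iUnion₂.2 ⟨i, hifs, hxi, by simp [hzero i x hx hxi, ht]⟩
    have agree : ∀ i ∈ fs, ∀ j ∈ fs, ∀ x, x ∈ V' i → x ∈ V' j → φl i x = φl j x := by
      intro i hi j hj x hxi hxj
      have hball : φl i x ∈ ball (0 : Fin m → ℝ) t := hxi.2
      have hFi : F (x, φl i x) = 0 :=
        (hiff i x hxi.1 (φl i x) (ball_subset_ball (hts i hi) hball)).2 rfl
      exact (hiff j x hxj.1 (φl i x) (ball_subset_ball (hts j hj) hball)).1 hFi
    set U : Set (Fin n → ℝ) := ⋃ i ∈ fs, V' i with hUdef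
    set φ : (Fin n → ℝ) → (Fin m → ℝ) :=
      fun x => if h : ∃ i, i ∈ fs ∧ x ∈ V' i then φl h.choose x else 0 with hφdef
    have hφeq : ∀ j ∈ fs, ∀ x ∈ V' j, φ x = φl j x := by
      intro j hj x hx
      have h : ∃ i, i ∈ fs ∧ x ∈ V' i := ⟨j, hj, hx⟩
      simp only [hφdef, dif_pos h]
      exact agree h.choose h.choose_spec.1 j hj x h.choose_spec.2 hx
    have hmemU : ∀ x ∈ U, ∃ i ∈ fs, x ∈ V' i := by
      intro x hx
      obtain ⟨i, hi, hxi⟩ := mem_iUnion₂.1 hx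
      exact ⟨i, hi, hxi⟩
    refine ⟨U, isOpen_biUnion fun i _ => hV'open i, hcover', t, ht, ?_, φ, ?_, ?_, ?_⟩
    · rintro ⟨x, y⟩ ⟨hx, hy⟩
      obtain ⟨i, hi, hxi⟩ := hmemU x hx
      exact hVW i ⟨hxi.1, ball_subset_ball (hts i hi) hy⟩
    · apply contDiffOn_of_locally_contDiffOn
      intro x hx
      obtain ⟨i, hi, hxi⟩ := hmemU x hx
      refine ⟨V' i, hV'open i, hxi, ?_⟩
      exact ((hφl i).mono fun z hz => hz.2.1).congr fun z hz => hφeq i hi z hz.2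
    · intro x hx
      obtain ⟨i, hi, hxi⟩ := hmemU x hx
      rw [hφeq i hi x hxi]
      exact hxi.2
    · ext p
      simp only [mem_setOf_eq, mem_image, mem_prod]
      constructor
      · rintro ⟨⟨hpU, hpB⟩, hFp⟩
        obtain ⟨i, hi, hxi⟩ := hmemU p.1 hpU
        have h1 : p.2 = φl i p.1 := by
          refine (hiff i p.1 hxi.1 p.2 (ball_subset_ball (hts i hi) hpB)).1 ?_
          rw [Prod.mk.eta]; exact hFp
        exact ⟨p.1, hpU, by rw [← hφeq i hi p.1 hxi] at h1; exact Prod.ext rfl h1.symm⟩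
      · rintro ⟨x, hxU, rfl⟩
        obtain ⟨i, hi, hxi⟩ := hmemU x hxU
        have hb : φ x ∈ ball (0 : Fin m → ℝ) t := by rw [hφeq i hi x hxi]; exact hxi.2
        refine ⟨⟨hxU, hb⟩, ?_⟩
        have : F (x, φl i x) = 0 :=
          (hiff i x hxi.1 (φl i x) (ball_subset_ball (hts i hi) hxi.2)).2 rfl
        rw [hφeq i hi x hxi]
        exact this
end

section
/- Let Z ⊂ ℝ^n_{≫0} be compact, α ∈ ℝ^{n×m}, β̂ ∈ ℝ^{m×m} invertible, γ ∈ ℝ^{m×n}, δ ∈ ℝ^{m×k} (k ≥ 0), and define, on the open set of (z, ŷ, η) ∈ ℝ^n × ℝ^m × ℝ with z + αβ̂⁻¹ŷ ≫ 0 and 𝟙 − δᵀŷ ≫ 0, the C² function g_*(z, ŷ, η) := ŷ − η (z + αβ̂⁻¹ŷ)^γ ∘ (𝟙 − δᵀŷ)^δ. Then g_*(z,0,0) = 0 and the partial Jacobian D_ŷ g_*(z,0,0) equals the m × m identity matrix for every z ∈ Z; consequently there exist η₁ > 0, y_max > 0, and a C² function θ : Z × (−η₁, η₁) → B_{y_max}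 with θ(z,0) = 0 for all z ∈ Z, whose graph is exactly the zero set of g_* in Z × B_{y_max} × (−η₁, η₁): {(z, ŷ, η) ∈ Z × B_{y_max} × (−η₁, η₁) : g_*(z, ŷ, η) = 0} = {(z, θ(z,η), η) : (z,η) ∈ Z × (−η₁, η₁)}. -/
open Matrix Metric Set
open scoped NNReal

/-- `vpow x A` is the vector of generalised monomials `x^A`, with `i`-th entry
`∏ j, (x j) ^ (A i j)` (real powers of positive reals). -/
noncomputable def vpow {ι κ : Type*} [Fintype ι] (x : ι → ℝ) (A : Matrix κ ι ℝ) : κ → ℝ :=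
  fun i => ∏ j, x j ^ A i j

lemma contDiff_mulVec {a b : ℕ} {N : WithTop ℕ∞} (M : Matrix (Fin a) (Fin b) ℝ) :
    ContDiff ℝ N (fun v : Fin b → ℝ => M.mulVec v) := by
  rw [contDiff_pi]
  intro j
  simp only [Matrix.mulVec, dotProduct]
  exact ContDiff.sum fun l _ => contDiff_const.mul (ContinuousLinearMap.proj l : (Fin b → ℝ) →L[ℝ] ℝ).contDiff

lemma contDiffAt_vpow {ι κ : Type*} [Fintype ι] [Fintype κ] (A : Matrix κ ι ℝ)
    {E : Type*} [NormedAddCommGroup E] [NormedSpace ℝ E] {N : WithTop ℕ∞}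
    {u : E → ι → ℝ} {x : E} (hu : ContDiffAt ℝ N u x) (hx : ∀ j, u x j ≠ 0) :
    ContDiffAt ℝ N (fun p => vpow (u p) A) x := by
  rw [contDiffAt_pi]
  intro i
  simp only [vpow]
  exact contDiffAt_prod fun j _ =>
    ContDiffAt.comp (g := fun t : ℝ => t ^ A i j) (f := fun x => u x j) x
      (Real.contDiffAt_rpow_const_of_ne (p := A i j) (hx j)) (contDiffAt_pi.mp hu j)

set_option maxHeartbeats 1600000 in
lemma exists_theta (n m : ℕ)
    (D : Set ((Fin n → ℝ) × (Fin m → ℝ))) (hD : IsOpen D)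
    (h : (Fin n → ℝ) × (Fin m → ℝ) → (Fin m → ℝ)) (hh : ContDiffOn ℝ 2 h D)
    (Kop K : Set (Fin n → ℝ)) (hKopen : IsOpen Kop) (hKopK : Kop ⊆ K)
    (hK : IsCompact K)
    (r0 : ℝ) (hr0 : 0 < r0) (hKD : K ×ˢ Metric.closedBall 0 r0 ⊆ D) :
    ∃ η₁ : ℝ, 0 < η₁ ∧ ∃ θ : (Fin n → ℝ) × ℝ → (Fin m → ℝ),
      ContDiffOn ℝ 2 θ (Kop ×ˢ Set.Ioo (-η₁) η₁) ∧
      (∀ z ∈ K, ∀ η : ℝ, |η| ≤ η₁ →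
        (θ (z, η) ∈ Metric.ball (0 : Fin m → ℝ) r0 ∧ θ (z, η) = η • h (z, θ (z, η)))) ∧
      (∀ z ∈ K, ∀ η : ℝ, |η| ≤ η₁ → ∀ y ∈ Metric.closedBall (0 : Fin m → ℝ) r0,
        y = η • h (z, y) → y = θ (z, η)) := by
  classical
  have hKc : IsCompact (K ×ˢ Metric.closedBall (0 : Fin m → ℝ) r0) :=
    hK.prod (isCompact_closedBall _ _)
  set Kc : Set ((Fin n → ℝ) × (Fin m → ℝ)) := K ×ˢ Metric.closedBall (0 : Fin m → ℝ) r0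
    with hKc_def
  -- bounds
  obtain ⟨B1, hB1⟩ := hKc.exists_bound_of_continuousOn (hh.continuousOn.mono hKD)
  have hdhcont : ContinuousOn (fderiv ℝ h) D :=
    hh.continuousOn_fderiv_of_isOpen hD (by norm_num)
  obtain ⟨B2, hB2⟩ := hKc.exists_bound_of_continuousOn (hdhcont.mono hKD)
  set B : ℝ := |B1| + |B2| + 1 with hB_def
  have hBpos : 0 < B := by positivity
  have hBh : ∀ q ∈ Kc, ‖h q‖ ≤ B := fun q hq =>
    (hB1 q hq).trans (by rw [hB_def]; have := abs_nonneg B2; have := le_abs_self B1; linarith)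
  have hBdh : ∀ q ∈ Kc, ‖fderiv ℝ h q‖ ≤ B := fun q hq =>
    (hB2 q hq).trans (by rw [hB_def]; have := abs_nonneg B1; have := le_abs_self B2; linarith)
  set η₁ : ℝ := min (1 / (2 * B)) (r0 / (2 * B)) with hη₁_def
  have hη₁pos : 0 < η₁ := lt_min (by positivity) (by positivity)
  -- derivative of y ↦ h (z, y)
  set J : (Fin m → ℝ) →L[ℝ] (Fin n → ℝ) × (Fin m → ℝ) := (0 : (Fin m → ℝ) →L[ℝ] (Fin n → ℝ)).prod (ContinuousLinearMap.id ℝ (Fin m → ℝ)) with hJ_def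
  have hJapp : ∀ y : Fin m → ℝ, J y = (0, y) := fun y => rfl
  have hDmem : ∀ z ∈ K, ∀ y ∈ Metric.closedBall (0 : Fin m → ℝ) r0, (z, y) ∈ D :=
    fun z hz y hy => hKD ⟨hz, hy⟩
  have hhat : ∀ z ∈ K, ∀ y ∈ Metric.closedBall (0 : Fin m → ℝ) r0,
      HasFDerivAt h (fderiv ℝ h (z, y)) (z, y) := fun z hz y hy =>
    (((hh.contDiffAt (hD.mem_nhds (hDmem z hz y hy))).differentiableAt
      (by norm_num)).hasFDerivAt)
  have hpart : ∀ z ∈ K, ∀ y ∈ Metric.closedBall (0 : Fin m → ℝ) r0,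
      HasFDerivAt (fun y' : Fin m → ℝ => h (z, y')) ((fderiv ℝ h (z, y)).comp J) y := by
    intro z hz y hy
    have haff : HasFDerivAt (fun y' : Fin m → ℝ => ((z, y') : (Fin n → ℝ) × (Fin m → ℝ))) J y :=
      (hasFDerivAt_const z y).prodMk (hasFDerivAt_id y)
    exact (hhat z hz y hy).comp y haff
  have hJnorm : ‖J‖ ≤ 1 := by
    apply ContinuousLinearMap.opNorm_le_bound _ zero_le_one
    intro y
    rw [hJapp, one_mul, Prod.norm_def]
    simp
  have hpartnorm : ∀ z ∈ K, ∀ y ∈ Metric.closedBall (0 : Fin m → ℝ) r0,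
      ‖(fderiv ℝ h (z, y)).comp J‖ ≤ B := by
    intro z hz y hy
    refine (ContinuousLinearMap.opNorm_comp_le _ _).trans ?_
    have h1 := hBdh (z, y) ⟨hz, hy⟩
    calc ‖fderiv ℝ h (z, y)‖ * ‖J‖ ≤ ‖fderiv ℝ h (z, y)‖ * 1 :=
          mul_le_mul_of_nonneg_left hJnorm (ContinuousLinearMap.opNorm_nonneg _)
      _ = ‖fderiv ℝ h (z, y)‖ := mul_one _
      _ ≤ B := h1
  -- mean value inequality
  have hMVT : ∀ z ∈ K, ∀ y ∈ Metric.closedBall (0 : Fin m → ℝ) r0, ∀ y' ∈ Metric.closedBall (0 : Fin m → ℝ) r0,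
      ‖h (z, y) - h (z, y')‖ ≤ B * ‖y - y'‖ := by
    intro z hz y hy y' hy'
    exact Convex.norm_image_sub_le_of_norm_hasFDerivWithin_le
      (f := fun y' : Fin m → ℝ => h (z, y')) (f' := fun y => (fderiv ℝ h (z, y)).comp J)
      (fun x hx => (hpart z hz x hx).hasFDerivWithinAt)
      (fun x hx => hpartnorm z hz x hx) (convex_closedBall _ _) hy' hy
  have hηB : ∀ η : ℝ, |η| ≤ η₁ → |η| * B ≤ 1 / 2 := by
    intro η hη
    have h1 : |η| ≤ 1 / (2 * B) := hη.trans (min_le_left _ _)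
    calc |η| * B ≤ (1 / (2 * B)) * B := mul_le_mul_of_nonneg_right h1 hBpos.le
      _ = 1 / 2 := by field_simp
  have hηB2 : ∀ η : ℝ, |η| ≤ η₁ → |η| * B ≤ r0 / 2 := by
    intro η hη
    have h1 : |η| ≤ r0 / (2 * B) := hη.trans (min_le_right _ _)
    calc |η| * B ≤ (r0 / (2 * B)) * B := mul_le_mul_of_nonneg_right h1 hBpos.le
      _ = r0 / 2 := by field_simp
  -- the contraction bound
  have hsmall : ∀ z ∈ K, ∀ η : ℝ, |η| ≤ η₁ → ∀ y ∈ Metric.closedBall (0 : Fin m → ℝ) r0,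
      ‖η • h (z, y)‖ ≤ r0 / 2 := by
    intro z hz η hη y hy
    rw [norm_smul, Real.norm_eq_abs]
    calc |η| * ‖h (z, y)‖ ≤ |η| * B :=
          mul_le_mul_of_nonneg_left (hBh (z, y) ⟨hz, hy⟩) (abs_nonneg η)
      _ ≤ r0 / 2 := hηB2 η hη
  have hlip : ∀ z ∈ K, ∀ η : ℝ, |η| ≤ η₁ → ∀ y ∈ Metric.closedBall (0 : Fin m → ℝ) r0,
      ∀ y' ∈ Metric.closedBall (0 : Fin m → ℝ) r0,
      ‖η • h (z, y) - η • h (z, y')‖ ≤ (1 / 2) * ‖y - y'‖ := by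
    intro z hz η hη y hy y' hy'
    rw [← smul_sub, norm_smul, Real.norm_eq_abs]
    calc |η| * ‖h (z, y) - h (z, y')‖ ≤ |η| * (B * ‖y - y'‖) :=
          mul_le_mul_of_nonneg_left (hMVT z hz y hy y' hy') (abs_nonneg η)
      _ = (|η| * B) * ‖y - y'‖ := by ring
      _ ≤ (1 / 2) * ‖y - y'‖ :=
          mul_le_mul_of_nonneg_right (hηB η hη) (norm_nonneg (y - y'))
  -- uniqueness of fixed points
  have huniq : ∀ z ∈ K, ∀ η : ℝ, |η| ≤ η₁ → ∀ y ∈ Metric.closedBall (0 : Fin m → ℝ) r0,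
      y = η • h (z, y) → ∀ y' ∈ Metric.closedBall (0 : Fin m → ℝ) r0, y' = η • h (z, y') → y = y' := by
    intro z hz η hη y hy hyfix y' hy' hyfix'
    have hkey : ‖y - y'‖ ≤ (1 / 2) * ‖y - y'‖ := by
      calc ‖y - y'‖ = ‖η • h (z, y) - η • h (z, y')‖ := by rw [← hyfix, ← hyfix']
        _ ≤ (1 / 2) * ‖y - y'‖ := hlip z hz η hη y hy y' hy'
    have : ‖y - y'‖ ≤ 0 := by linarith
    have : y - y' = 0 := norm_le_zero_iff.mp this
    exact sub_eq_zero.mp this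
  -- existence of fixed points via the contraction mapping principle
  have hex : ∀ z ∈ K, ∀ η : ℝ, |η| ≤ η₁ →
      ∃ y, y ∈ Metric.closedBall (0 : Fin m → ℝ) r0 ∧ y = η • h (z, y) ∧ ‖y‖ ≤ r0 / 2 := by
    intro z hz η hη
    haveI : Nonempty ↥(Metric.closedBall (0 : Fin m → ℝ) r0) :=
      ⟨⟨0, Metric.mem_closedBall_self hr0.le⟩⟩
    haveI : CompleteSpace ↥(Metric.closedBall (0 : Fin m → ℝ) r0) :=
      Metric.isClosed_closedBall.completeSpace_coe
    set T : ↥(Metric.closedBall (0 : Fin m → ℝ) r0) → ↥(Metric.closedBall (0 : Fin m → ℝ) r0) :=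
      fun y => ⟨η • h (z, ↑y), by
        rw [Metric.mem_closedBall, dist_zero_right]
        exact (hsmall z hz η hη ↑y y.2).trans (by linarith)⟩ with hT_def
    have hct : ContractingWith (1/2 : ℝ≥0) T := by
      constructor
      · rw [← NNReal.coe_lt_coe]
        norm_num
      · apply LipschitzWith.of_dist_le_mul
        intro x y
        have hl := hlip z hz η hη ↑x x.2 ↑y y.2
        rw [Subtype.dist_eq, Subtype.dist_eq, dist_eq_norm, dist_eq_norm]
        show ‖η • h (z, ↑x) - η • h (z, ↑y)‖ ≤ _
        refine hl.trans ?_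
        apply mul_le_mul_of_nonneg_right _ (norm_nonneg _)
        norm_num
    have hfix := hct.fixedPoint_isFixedPt
    have hfixv : η • h (z, ↑(ContractingWith.fixedPoint T hct)) =
        ↑(ContractingWith.fixedPoint T hct) := congrArg Subtype.val hfix
    refine ⟨↑(ContractingWith.fixedPoint T hct), (ContractingWith.fixedPoint T hct).2,
      hfixv.symm, ?_⟩
    rw [← hfixv]
    exact hsmall z hz η hη _ (ContractingWith.fixedPoint T hct).2
  -- definition of θ
  set θ : (Fin n → ℝ) × ℝ → (Fin m → ℝ) := fun q =>
    if hq : q.1 ∈ K ∧ |q.2| ≤ η₁ then (hex q.1 hq.1 q.2 hq.2).choose else 0 with hθ_def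
  have hθspec : ∀ z, ∀ hz : z ∈ K, ∀ η : ℝ, ∀ hη : |η| ≤ η₁,
      θ (z, η) ∈ Metric.closedBall (0 : Fin m → ℝ) r0 ∧ θ (z, η) = η • h (z, θ (z, η)) ∧
        ‖θ (z, η)‖ ≤ r0 / 2 := by
    intro z hz η hη
    have heq : θ (z, η) = (hex z hz η hη).choose := by
      rw [hθ_def]
      exact dif_pos ⟨hz, hη⟩
    rw [heq]
    exact (hex z hz η hη).choose_spec
  have hθuniq : ∀ z ∈ K, ∀ η : ℝ, |η| ≤ η₁ → ∀ y ∈ Metric.closedBall (0 : Fin m → ℝ) r0,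
      y = η • h (z, y) → y = θ (z, η) := by
    intro z hz η hη y hy hyfix
    exact huniq z hz η hη y hy hyfix (θ (z, η)) (hθspec z hz η hη).1 (hθspec z hz η hη).2.1
  refine ⟨η₁, hη₁pos, θ, ?_, ?_, hθuniq⟩
  · -- smoothness
    intro q₀ hq₀
    have hz₀Kop : q₀.1 ∈ Kop := hq₀.1
    have hη₀Ioo : q₀.2 ∈ Set.Ioo (-η₁) η₁ := hq₀.2
    have hz₀K : q₀.1 ∈ K := hKopK hz₀Kop
    have hη₀le : |q₀.2| ≤ η₁ := le_of_lt (abs_lt.mpr ⟨hη₀Ioo.1, hη₀Ioo.2⟩)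
    obtain ⟨hy₀cb, hy₀fix, hy₀half⟩ := hθspec q₀.1 hz₀K q₀.2 hη₀le
    set y₀ : Fin m → ℝ := θ (q₀.1, q₀.2) with hy₀_def
    set p₀ : (Fin n → ℝ) × (Fin m → ℝ) × ℝ := (q₀.1, y₀, q₀.2) with hp₀_def
    have hp₀D : (q₀.1, y₀) ∈ D := hDmem q₀.1 hz₀K y₀ hy₀cb
    set gst : (Fin n → ℝ) × (Fin m → ℝ) × ℝ → (Fin m → ℝ) :=
      fun p => p.2.1 - p.2.2 • h (p.1, p.2.1) with hgst_def
    have hgstC : ContDiffAt ℝ 2 gst p₀ := by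
      have hc1 : ContDiffAt ℝ 2
          (fun p : (Fin n → ℝ) × (Fin m → ℝ) × ℝ => h (p.1, p.2.1)) p₀ :=
        (hh.contDiffAt (hD.mem_nhds hp₀D)).comp p₀
          (contDiff_fst.prodMk contDiff_snd.fst).contDiffAt
      exact contDiff_snd.fst.contDiffAt.sub (contDiff_snd.snd.contDiffAt.smul hc1)
    set Φ : (Fin n → ℝ) × (Fin m → ℝ) × ℝ → (Fin n → ℝ) × (Fin m → ℝ) × ℝ :=
      fun p => (p.1, gst p, p.2.2) with hΦ_def
    have hΦC : ContDiffAt ℝ 2 Φ p₀ :=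
      contDiff_fst.contDiffAt.prodMk (hgstC.prodMk contDiff_snd.snd.contDiffAt)
    set L : ((Fin n → ℝ) × (Fin m → ℝ) × ℝ) →L[ℝ] (Fin m → ℝ) := fderiv ℝ gst p₀ with hL_def
    have hLd : HasFDerivAt gst L p₀ :=
      (hgstC.differentiableAt (by norm_num)).hasFDerivAt
    set t : (Fin m → ℝ) →L[ℝ] (Fin m → ℝ) :=
      q₀.2 • ((fderiv ℝ h (q₀.1, y₀)).comp J) with ht_def
    have htn : ‖t‖ < 1 := by
      have h1 : ‖t‖ = |q₀.2| * ‖(fderiv ℝ h (q₀.1, y₀)).comp J‖ := by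
        rw [ht_def, norm_smul q₀.2 ((fderiv ℝ h (q₀.1, y₀)).comp J), Real.norm_eq_abs]
      have h2 : |q₀.2| * ‖(fderiv ℝ h (q₀.1, y₀)).comp J‖ ≤ |q₀.2| * B :=
        mul_le_mul_of_nonneg_left (hpartnorm q₀.1 hz₀K y₀ hy₀cb) (abs_nonneg _)
      have h3 := hηB q₀.2 hη₀le
      rw [h1]; exact lt_of_le_of_lt (h2.trans h3) one_half_lt_one
    set Jm : (Fin m → ℝ) →L[ℝ] (Fin n → ℝ) × (Fin m → ℝ) × ℝ :=
      (0 : (Fin m → ℝ) →L[ℝ] (Fin n → ℝ)).prod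
        ((ContinuousLinearMap.id ℝ (Fin m → ℝ)).prod (0 : (Fin m → ℝ) →L[ℝ] ℝ)) with hJm_def
    set A : (Fin m → ℝ) →L[ℝ] (Fin m → ℝ) := L.comp Jm with hA_def
    have hA : A = ContinuousLinearMap.id ℝ (Fin m → ℝ) - t := by
      have h1 : HasFDerivAt (fun y : Fin m → ℝ => gst (q₀.1, y, q₀.2)) (L.comp Jm) y₀ :=
        HasFDerivAt.comp (g := gst) (f := fun y : Fin m → ℝ => (q₀.1, y, q₀.2)) y₀ hLd ((hasFDerivAt_const q₀.1 y₀).prodMk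
          ((hasFDerivAt_id y₀).prodMk (hasFDerivAt_const q₀.2 y₀)))
      have h2 : HasFDerivAt (fun y : Fin m → ℝ => y - q₀.2 • h (q₀.1, y))
          (ContinuousLinearMap.id ℝ (Fin m → ℝ) - t) y₀ := by
        rw [ht_def]
        exact (hasFDerivAt_id y₀).sub ((hpart q₀.1 hz₀K y₀ hy₀cb).const_smul q₀.2)
      exact h1.unique h2
    set u : ((Fin m → ℝ) →L[ℝ] (Fin m → ℝ))ˣ := Units.oneSub t htn with hu_def
    have huval : (↑u : (Fin m → ℝ) →L[ℝ] (Fin m → ℝ)) = A := by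
      rw [hu_def, Units.val_oneSub, hA, ContinuousLinearMap.one_def]
    have hAinvA : ∀ v, (↑u⁻¹ : (Fin m → ℝ) →L[ℝ] (Fin m → ℝ)) (A v) = v := by
      intro v
      calc (↑u⁻¹ : (Fin m → ℝ) →L[ℝ] (Fin m → ℝ)) (A v)
          = ((↑u⁻¹ * ↑u : (Fin m → ℝ) →L[ℝ] (Fin m → ℝ))) v := by
            rw [huval, ContinuousLinearMap.mul_apply]
        _ = v := by rw [u.inv_mul, ContinuousLinearMap.one_apply]
    have hAAinv : ∀ v, A ((↑u⁻¹ : (Fin m → ℝ) →L[ℝ] (Fin m → ℝ)) v) = v := by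
      intro v
      calc A ((↑u⁻¹ : (Fin m → ℝ) →L[ℝ] (Fin m → ℝ)) v)
          = ((↑u * ↑u⁻¹ : (Fin m → ℝ) →L[ℝ] (Fin m → ℝ))) v := by
            rw [huval, ContinuousLinearMap.mul_apply]
        _ = v := by rw [u.mul_inv, ContinuousLinearMap.one_apply]
    -- projections
    set πz : ((Fin n → ℝ) × (Fin m → ℝ) × ℝ) →L[ℝ] (Fin n → ℝ) :=
      ContinuousLinearMap.fst ℝ (Fin n → ℝ) ((Fin m → ℝ) × ℝ) with hπz_def
    set πyr : ((Fin n → ℝ) × (Fin m → ℝ) × ℝ) →L[ℝ] ((Fin m → ℝ) × ℝ) :=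
      ContinuousLinearMap.snd ℝ (Fin n → ℝ) ((Fin m → ℝ) × ℝ) with hπyr_def
    set πw : ((Fin n → ℝ) × (Fin m → ℝ) × ℝ) →L[ℝ] (Fin m → ℝ) :=
      (ContinuousLinearMap.fst ℝ (Fin m → ℝ) ℝ).comp πyr with hπw_def
    set πη : ((Fin n → ℝ) × (Fin m → ℝ) × ℝ) →L[ℝ] ℝ :=
      (ContinuousLinearMap.snd ℝ (Fin m → ℝ) ℝ).comp πyr with hπη_def
    set L₀ : ((Fin n → ℝ) × (Fin m → ℝ) × ℝ) →L[ℝ] (Fin m → ℝ) :=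
      L.comp (πz.prod ((0 : ((Fin n → ℝ) × (Fin m → ℝ) × ℝ) →L[ℝ] (Fin m → ℝ)).prod πη))
      with hL₀_def
    set fE : ((Fin n → ℝ) × (Fin m → ℝ) × ℝ) →L[ℝ] ((Fin n → ℝ) × (Fin m → ℝ) × ℝ) :=
      πz.prod (L.prod πη) with hfE_def
    set gE : ((Fin n → ℝ) × (Fin m → ℝ) × ℝ) →L[ℝ] ((Fin n → ℝ) × (Fin m → ℝ) × ℝ) :=
      πz.prod (((↑u⁻¹ : (Fin m → ℝ) →L[ℝ] (Fin m → ℝ)).comp (πw - L₀)).prod πη) with hgE_def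
    have hfEapp : ∀ p : (Fin n → ℝ) × (Fin m → ℝ) × ℝ, fE p = (p.1, L p, p.2.2) := fun p => rfl
    have hgEapp : ∀ p : (Fin n → ℝ) × (Fin m → ℝ) × ℝ,
        gE p = (p.1, (↑u⁻¹ : (Fin m → ℝ) →L[ℝ] (Fin m → ℝ)) (p.2.1 - L (p.1, 0, p.2.2)),
          p.2.2) := fun p => rfl
    have hsplit : ∀ p : (Fin n → ℝ) × (Fin m → ℝ) × ℝ,
        L p = L (p.1, 0, p.2.2) + A p.2.1 := by
      intro p
      have hsum : ((p.1, (0 : Fin m → ℝ), p.2.2) : (Fin n → ℝ) × (Fin m → ℝ) × ℝ) +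
          ((0, p.2.1, 0) : (Fin n → ℝ) × (Fin m → ℝ) × ℝ) = p := by
        apply Prod.ext
        · simp
        · apply Prod.ext <;> simp
      have hAv : A p.2.1 = L (0, p.2.1, 0) := rfl
      rw [hAv, ← map_add, hsum]
    have hleft : Function.LeftInverse gE fE := by
      intro p
      rw [hfEapp p, hgEapp]
      show (p.1, (↑u⁻¹ : (Fin m → ℝ) →L[ℝ] (Fin m → ℝ)) (L p - L (p.1, 0, p.2.2)), p.2.2) = p
      have h1 : L p - L (p.1, 0, p.2.2) = A p.2.1 := by rw [hsplit p]; ring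
      rw [h1, hAinvA]
    have hright : Function.RightInverse gE fE := by
      intro p
      rw [hgEapp p, hfEapp]
      show (p.1, L (p.1, (↑u⁻¹ : (Fin m → ℝ) →L[ℝ] (Fin m → ℝ)) (p.2.1 - L (p.1, 0, p.2.2)),
        p.2.2), p.2.2) = p
      rw [hsplit (p.1, (↑u⁻¹ : (Fin m → ℝ) →L[ℝ] (Fin m → ℝ)) (p.2.1 - L (p.1, 0, p.2.2)),
        p.2.2), hAAinv]
      show (p.1, L (p.1, 0, p.2.2) + (p.2.1 - L (p.1, 0, p.2.2)), p.2.2) = p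
      rw [add_sub_cancel]
    set EL : ((Fin n → ℝ) × (Fin m → ℝ) × ℝ) ≃L[ℝ] ((Fin n → ℝ) × (Fin m → ℝ) × ℝ) :=
      ContinuousLinearEquiv.equivOfInverse fE gE hleft hright with hEL_def
    have hΦd : HasFDerivAt Φ (EL : ((Fin n → ℝ) × (Fin m → ℝ) × ℝ) →L[ℝ]
        ((Fin n → ℝ) × (Fin m → ℝ) × ℝ)) p₀ := by
      have hfst : HasFDerivAt (fun p : (Fin n → ℝ) × (Fin m → ℝ) × ℝ => p.1) πz p₀ :=
        hasFDerivAt_fst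
      have hsnd2 : HasFDerivAt (fun p : (Fin n → ℝ) × (Fin m → ℝ) × ℝ => p.2.2) πη p₀ :=
        hasFDerivAt_snd.comp p₀ hasFDerivAt_snd
      exact hfst.prodMk (hLd.prodMk hsnd2)
    have hn12 : (2 : WithTop ℕ∞) ≠ 0 := by norm_num
    have hsd := hΦC.hasStrictFDerivAt' hΦd hn12
    set Ψ := hΦC.localInverse hΦd hn12 with hΨ_def
    have hΨc : ContDiffAt ℝ 2 Ψ (Φ p₀) := hΦC.to_localInverse hΦd hn12
    have hΨrfl : Ψ = hsd.localInverse Φ EL p₀ := rfl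
    have hrinv : ∀ᶠ w in nhds (Φ p₀), Φ (Ψ w) = w := by
      rw [hΨrfl]; exact hsd.eventually_right_inverse
    have hΨcont : ContinuousAt Ψ (Φ p₀) := by
      rw [hΨrfl]; exact hsd.localInverse_continuousAt
    have hΨp₀ : Ψ (Φ p₀) = p₀ := by
      rw [hΨrfl]; exact hsd.localInverse_apply_image
    have hΦp₀ : Φ p₀ = (q₀.1, 0, q₀.2) := by
      have hgst0 : gst p₀ = 0 := sub_eq_zero_of_eq hy₀fix
      show (p₀.1, gst p₀, p₀.2.2) = (q₀.1, 0, q₀.2)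
      rw [hgst0]
    set ι : (Fin n → ℝ) × ℝ → (Fin n → ℝ) × (Fin m → ℝ) × ℝ :=
      fun q => (q.1, 0, q.2) with hι_def
    have hιc : Continuous ι := continuous_fst.prodMk (continuous_const.prodMk continuous_snd)
    have hιq₀ : ι q₀ = Φ p₀ := by rw [hΦp₀]
    set ψ : (Fin n → ℝ) × ℝ → (Fin m → ℝ) := fun q => (Ψ (ι q)).2.1 with hψ_def
    have hψc : ContDiffAt ℝ 2 ψ q₀ := by
      have hΨc' : ContDiffAt ℝ 2 Ψ (ι q₀) := by rw [hιq₀]; exact hΨc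
      have hcomp : ContDiffAt ℝ 2 (fun q : (Fin n → ℝ) × ℝ => Ψ (ι q)) q₀ :=
        hΨc'.comp q₀ (contDiff_fst.prodMk (contDiff_const.prodMk contDiff_snd)).contDiffAt
      exact contDiff_snd.fst.contDiffAt.comp q₀ hcomp
    have hψq₀ : ψ q₀ = y₀ := by
      rw [hψ_def]
      show (Ψ (ι q₀)).2.1 = y₀
      rw [hιq₀, hΨp₀]
    have hev : θ =ᶠ[nhds q₀] ψ := by
      have e1 : ∀ᶠ q in nhds q₀, Φ (Ψ (ι q)) = ι q := by
        have ht : Filter.Tendsto ι (nhds q₀) (nhds (Φ p₀)) := by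
          rw [← hιq₀]; exact hιc.continuousAt
        exact ht.eventually hrinv
      have e2 : ∀ᶠ q in nhds q₀, ‖(Ψ (ι q)).2.1‖ ≤ r0 := by
        have hball : ∀ᶠ v in nhds (ψ q₀), ‖v‖ ≤ r0 := by
          have hmem : ψ q₀ ∈ Metric.ball (0 : Fin m → ℝ) r0 := by
            rw [hψq₀, mem_ball_zero_iff]; linarith
          exact (Metric.isOpen_ball.eventually_mem hmem).mono fun v hv =>
            (mem_ball_zero_iff.mp hv).le
        exact hψc.continuousAt.eventually hball
      have e3 : ∀ᶠ q : (Fin n → ℝ) × ℝ in nhds q₀, q.1 ∈ Kop :=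
        Filter.eventually_of_mem ((hKopen.preimage continuous_fst).mem_nhds hz₀Kop)
          fun q hq => hq
      have e4 : ∀ᶠ q : (Fin n → ℝ) × ℝ in nhds q₀, |q.2| ≤ η₁ :=
        Filter.eventually_of_mem ((isOpen_Ioo.preimage continuous_snd).mem_nhds hη₀Ioo)
          fun q hq => le_of_lt (abs_lt.mpr ⟨hq.1, hq.2⟩)
      filter_upwards [e1, e2, e3, e4] with q h1 h2 h3 h4
      have hw1 : (Ψ (ι q)).1 = q.1 := congrArg Prod.fst h1
      have hw3 : (Ψ (ι q)).2.2 = q.2 := congrArg (fun p : _ × _ × ℝ => p.2.2) h1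
      have hw2 : gst (Ψ (ι q)) = 0 := congrArg (fun p : _ × _ × ℝ => p.2.1) h1
      have hfixq : (Ψ (ι q)).2.1 = q.2 • h (q.1, (Ψ (ι q)).2.1) := by
        have := sub_eq_zero.mp hw2
        rw [hw1, hw3] at this
        exact this
      have hmemcb : (Ψ (ι q)).2.1 ∈ Metric.closedBall (0 : Fin m → ℝ) r0 :=
        mem_closedBall_zero_iff.mpr h2
      have := hθuniq q.1 (hKopK h3) q.2 h4 ((Ψ (ι q)).2.1) hmemcb hfixq
      exact this.symm
    exact (hψc.congr_of_eventuallyEq hev).contDiffWithinAt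
  · intro z hz η hη
    refine ⟨?_, (hθspec z hz η hη).2.1⟩
    rw [mem_ball_zero_iff]
    have := (hθspec z hz η hη).2.2
    linarith

/-- **Implicit function construction of `θ`.** On the open domain where
`z + αβ̂⁻¹ŷ ≫ 0` and `𝟙 − δᵀŷ ≫ 0`, the `C²` function
`g_*(z,ŷ,η) := ŷ − η (z+αβ̂⁻¹ŷ)^γ ∘ (𝟙−δᵀŷ)^δ` satisfies `g_*(z,0,0) = 0` and
`D_ŷ g_*(z,0,0) = id` for every `z` in the compact set `Z ⊂ ℝ^n_{≫0}`; consequently there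
exist `η₁ > 0`, `y_max > 0` and a `C²` function `θ : Z × (−η₁,η₁) → B_{y_max}` with
`θ(z,0) = 0`, whose graph is exactly the zero set of `g_*` in `Z × B_{y_max} × (−η₁,η₁)`. -/
theorem implicit_function_theta_exists
    (n m k : ℕ)
    (Z : Set (Fin n → ℝ)) (hZ : IsCompact Z) (hZpos : ∀ z ∈ Z, ∀ i, 0 < z i)
    (α : Matrix (Fin n) (Fin m) ℝ)
    (βhat : Matrix (Fin m) (Fin m) ℝ) (hβ : IsUnit βhat.det)
    (γ : Matrix (Fin m) (Fin n) ℝ) (δ : Matrix (Fin m) (Fin k) ℝ)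
    (Ω : Set ((Fin n → ℝ) × (Fin m → ℝ) × ℝ))
    (hΩ : Ω = {p : (Fin n → ℝ) × (Fin m → ℝ) × ℝ |
        (∀ i, 0 < (p.1 + (α * βhat⁻¹).mulVec p.2.1) i) ∧
        (∀ j, 0 < (((fun _ => (1:ℝ)) : Fin k → ℝ) - δᵀ.mulVec p.2.1) j)})
    (gstar : (Fin n → ℝ) × (Fin m → ℝ) × ℝ → (Fin m → ℝ))
    (hgstar : ∀ p, gstar p
      = p.2.1 - p.2.2 •
          (vpow (p.1 + (α * βhat⁻¹).mulVec p.2.1) γ *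
           vpow (((fun _ => (1:ℝ)) : Fin k → ℝ) - δᵀ.mulVec p.2.1) δ)) :
    IsOpen Ω ∧
    ContDiffOn ℝ 2 gstar Ω ∧
    (∀ z ∈ Z, gstar (z, 0, 0) = 0) ∧
    (∀ z ∈ Z, fderiv ℝ (fun yhat : Fin m → ℝ => gstar (z, yhat, 0)) 0
        = ContinuousLinearMap.id ℝ (Fin m → ℝ)) ∧
    ∃ η₁ : ℝ, 0 < η₁ ∧ ∃ ymax : ℝ, 0 < ymax ∧
      ∃ θ : (Fin n → ℝ) × ℝ → (Fin m → ℝ),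
        (∃ U : Set ((Fin n → ℝ) × ℝ), IsOpen U ∧ Z ×ˢ Set.Ioo (-η₁) η₁ ⊆ U ∧
          ContDiffOn ℝ 2 θ U) ∧
        (∀ z ∈ Z, θ (z, 0) = 0) ∧
        {p : (Fin n → ℝ) × (Fin m → ℝ) × ℝ |
            p.1 ∈ Z ∧ p.2.1 ∈ Metric.ball (0 : Fin m → ℝ) ymax ∧
            p.2.2 ∈ Set.Ioo (-η₁) η₁ ∧ gstar p = 0}
          = {p : (Fin n → ℝ) × (Fin m → ℝ) × ℝ |
              p.1 ∈ Z ∧ p.2.2 ∈ Set.Ioo (-η₁) η₁ ∧ p.2.1 = θ (p.1, p.2.2)} := by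
  set M := α * βhat⁻¹ with hM
  set h : (Fin n → ℝ) × (Fin m → ℝ) → (Fin m → ℝ) := fun q =>
    vpow (q.1 + M.mulVec q.2) γ * vpow (((fun _ => (1:ℝ)) : Fin k → ℝ) - δᵀ.mulVec q.2) δ
    with hh_def
  set D : Set ((Fin n → ℝ) × (Fin m → ℝ)) := {q |
      (∀ i, 0 < (q.1 + M.mulVec q.2) i) ∧
      (∀ j, 0 < (((fun _ => (1:ℝ)) : Fin k → ℝ) - δᵀ.mulVec q.2) j)} with hD_def
  have hu1 : ∀ N : WithTop ℕ∞, ContDiff ℝ N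
      (fun q : (Fin n → ℝ) × (Fin m → ℝ) => q.1 + M.mulVec q.2) :=
    fun N => contDiff_fst.add ((contDiff_mulVec M).comp contDiff_snd)
  have hu2 : ∀ N : WithTop ℕ∞, ContDiff ℝ N
      (fun q : (Fin n → ℝ) × (Fin m → ℝ) =>
        (((fun _ => (1:ℝ)) : Fin k → ℝ) - δᵀ.mulVec q.2)) :=
    fun N => contDiff_const.sub ((contDiff_mulVec δᵀ).comp contDiff_snd)
  have hD : IsOpen D := by
    have h1 : IsOpen {q : (Fin n → ℝ) × (Fin m → ℝ) | ∀ i, 0 < (q.1 + M.mulVec q.2) i} := by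
      rw [setOf_forall]
      exact isOpen_iInter_of_finite fun i =>
        isOpen_lt continuous_const (((continuous_apply i).comp (hu1 2).continuous))
    have h2 : IsOpen {q : (Fin n → ℝ) × (Fin m → ℝ) |
        ∀ j, 0 < (((fun _ => (1:ℝ)) : Fin k → ℝ) - δᵀ.mulVec q.2) j} := by
      rw [setOf_forall]
      exact isOpen_iInter_of_finite fun j =>
        isOpen_lt continuous_const (((continuous_apply j).comp (hu2 2).continuous))
    rw [hD_def, setOf_and]
    exact h1.inter h2
  have hhD : ContDiffOn ℝ 2 h D := by
    intro q hq
    obtain ⟨hq1, hq2⟩ := hq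
    apply ContDiffAt.contDiffWithinAt
    exact (contDiffAt_vpow γ (hu1 2).contDiffAt fun j => (hq1 j).ne').mul
      (contDiffAt_vpow δ (hu2 2).contDiffAt fun j => (hq2 j).ne')
  have hΩD : Ω = (fun p : (Fin n → ℝ) × (Fin m → ℝ) × ℝ => (p.1, p.2.1)) ⁻¹' D := by
    rw [hΩ]; rfl
  have hΩopen : IsOpen Ω := by
    rw [hΩD]
    exact hD.preimage (continuous_fst.prodMk continuous_snd.fst)
  have hgh : ∀ p : (Fin n → ℝ) × (Fin m → ℝ) × ℝ, gstar p = p.2.1 - p.2.2 • h (p.1, p.2.1) :=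
    fun p => hgstar p
  refine ⟨hΩopen, ?_, ?_, ?_, ?_⟩
  · -- ContDiffOn gstar Ω
    intro p hp
    apply ContDiffAt.contDiffWithinAt
    have hpD : (p.1, p.2.1) ∈ D := by rw [hΩD] at hp; exact hp
    have h1 : ContDiffAt ℝ 2 (fun p : (Fin n → ℝ) × (Fin m → ℝ) × ℝ => h (p.1, p.2.1)) p :=
      (hhD.contDiffAt (hD.mem_nhds hpD)).comp p
        (contDiff_fst.prodMk contDiff_snd.fst).contDiffAt
    have h2 : ContDiffAt ℝ 2 (fun p : (Fin n → ℝ) × (Fin m → ℝ) × ℝ =>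
        p.2.1 - p.2.2 • h (p.1, p.2.1)) p :=
      contDiff_snd.fst.contDiffAt.sub (contDiff_snd.snd.contDiffAt.smul h1)
    exact h2.congr_of_eventuallyEq (Filter.Eventually.of_forall fun q => (hgh q))
  · intro z hz
    rw [hgstar]
    simp
  · intro z hz
    have hid : (fun yhat : Fin m → ℝ => gstar (z, yhat, 0)) = fun yhat => yhat := by
      funext y
      rw [hgstar]
      simp
    rw [hid]
    exact fderiv_id
  · -- main part
    have hPosOpen : IsOpen {z : Fin n → ℝ | ∀ i, 0 < z i} := by
      rw [setOf_forall]
      exact isOpen_iInter_of_finite fun i => isOpen_lt continuous_const (continuous_apply i)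
    obtain ⟨ε, hε, hKsub⟩ := hZ.exists_cthickening_subset_open hPosOpen
      (fun z hz i => hZpos z hz i)
    set K := cthickening ε Z with hK_def
    set Kop := thickening ε Z with hKop_def
    have hKcomp : IsCompact K := by
      apply Metric.isCompact_of_isClosed_isBounded isClosed_cthickening
      exact hZ.isBounded.cthickening
    have hKD0 : K ×ˢ ({0} : Set (Fin m → ℝ)) ⊆ D := by
      rintro ⟨z, y⟩ ⟨hzK, hy0⟩
      simp only [mem_singleton_iff] at hy0
      subst hy0
      rw [hD_def]
      constructor
      · intro i; simpa using hKsub hzK i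
      · intro j; simp
    obtain ⟨r0, hr0, hr0sub⟩ := (hKcomp.prod isCompact_singleton).exists_cthickening_subset_open hD hKD0
    have hKD : K ×ˢ Metric.closedBall (0 : Fin m → ℝ) r0 ⊆ D := by
      rintro ⟨z, y⟩ ⟨hzK, hy⟩
      apply hr0sub
      refine mem_cthickening_of_dist_le (z, y) (z, (0 : Fin m → ℝ)) r0
        (K ×ˢ ({0} : Set (Fin m → ℝ))) ⟨hzK, rfl⟩ ?_
      rw [Prod.dist_eq]
      simp only [dist_self]
      simpa [dist_eq_norm] using hy
    obtain ⟨η₁, hη₁, θ, hθsmooth, hθfix, hθuniq⟩ :=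
      exists_theta n m D hD h hhD Kop K Metric.isOpen_thickening (thickening_subset_cthickening ε Z)
        hKcomp r0 hr0 hKD
    have hZKop : Z ⊆ Kop := self_subset_thickening hε Z
    have hZK : Z ⊆ K := hZKop.trans (thickening_subset_cthickening ε Z)
    refine ⟨η₁, hη₁, r0, hr0, θ, ⟨Kop ×ˢ Set.Ioo (-η₁) η₁,
      (Metric.isOpen_thickening).prod isOpen_Ioo, prod_mono_left hZKop, hθsmooth⟩, ?_, ?_⟩
    · intro z hz
      exact (hθuniq z (hZK hz) 0 (by simp [le_of_lt hη₁]) 0 (by simp [le_of_lt hr0])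
        (by simp)).symm
    · ext p
      simp only [mem_setOf_eq]
      constructor
      · rintro ⟨hz, hball, hη, hg0⟩
        refine ⟨hz, hη, ?_⟩
        have hfix : p.2.1 = p.2.2 • h (p.1, p.2.1) := by
          have := hgh p
          rw [hg0] at this
          exact (sub_eq_zero.mp this.symm)
        exact hθuniq p.1 (hZK hz) p.2.2 (le_of_lt (abs_lt.mpr ⟨hη.1, hη.2⟩))
          p.2.1 (Metric.ball_subset_closedBall hball) hfix
      · rintro ⟨hz, hη, heq⟩
        have habs : |p.2.2| ≤ η₁ := le_of_lt (abs_lt.mpr ⟨hη.1, hη.2⟩)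
        obtain ⟨hball, hfix⟩ := hθfix p.1 (hZK hz) p.2.2 habs
        refine ⟨hz, by rw [heq]; exact hball, hη, ?_⟩
        rw [hgh p, heq]
        rw [← hfix]
        simp
end

section
/- In the setting of the previous implicit function construction — Z ⊂ ℝ^n_{≫0} compact, α ∈ ℝ^{n×m}, β̂ ∈ ℝ^{m×m} invertible, γ ∈ ℝ^{m×n}, δ ∈ ℝ^{m×k}, g_*(z, ŷ, η) := ŷ − η (z + αβ̂⁻¹ŷ)^γ ∘ (𝟙 − δᵀŷ)^δ, and θ : Z × (−η₁, η₁) → ℝ^m the C² function with θ(z,0) = 0 whose graph is the zero set of g_* near Z × {0} × {0} — the partial derivative of θ with respect to η at η = 0 satisfies D_η θ(z, 0) = z^γ for every z ∈ Z; in particular D_η θ(z,0) ≫ 0. -/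
open Matrix

/-- **`D_η θ(z,0) = z^γ`.** In the implicit function construction — `Z ⊂ ℝ^n_{≫0}` compact,
`g_*(z,ŷ,η) := ŷ − η (z+αβ̂⁻¹ŷ)^γ ∘ (𝟙−δᵀŷ)^δ`, and `θ` the `C²` function with `θ(z,0) = 0`
whose graph is the zero set of `g_*` in `Z × B_{y_max} × (−η₁,η₁)` — the partial derivative
of `θ` with respect to `η` at `0` satisfies `D_η θ(z,0) = z^γ ≫ 0` for every `z ∈ Z`. -/
theorem deriv_theta_at_zero_eq_zpow_gamma
    (n m k : ℕ)
    (Z : Set (Fin n → ℝ)) (hZ : IsCompact Z) (hZpos : ∀ z ∈ Z, ∀ i, 0 < z i)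
    (α : Matrix (Fin n) (Fin m) ℝ)
    (βhat : Matrix (Fin m) (Fin m) ℝ) (hβ : IsUnit βhat.det)
    (γ : Matrix (Fin m) (Fin n) ℝ) (δ : Matrix (Fin m) (Fin k) ℝ)
    (gstar : (Fin n → ℝ) × (Fin m → ℝ) × ℝ → (Fin m → ℝ))
    (hgstar : ∀ p, gstar p
      = p.2.1 - p.2.2 •
          (vpow (p.1 + (α * βhat⁻¹).mulVec p.2.1) γ *
           vpow (((fun _ => (1:ℝ)) : Fin k → ℝ) - δᵀ.mulVec p.2.1) δ))
    (η₁ : ℝ) (hη₁ : 0 < η₁) (ymax : ℝ) (hymax : 0 < ymax)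
    (θ : (Fin n → ℝ) × ℝ → (Fin m → ℝ))
    (hθC2 : ∃ U : Set ((Fin n → ℝ) × ℝ), IsOpen U ∧ Z ×ˢ Set.Ioo (-η₁) η₁ ⊆ U ∧
      ContDiffOn ℝ 2 θ U)
    (hθ0 : ∀ z ∈ Z, θ (z, 0) = 0)
    (hgraph :
      {p : (Fin n → ℝ) × (Fin m → ℝ) × ℝ |
          p.1 ∈ Z ∧ p.2.1 ∈ Metric.ball (0 : Fin m → ℝ) ymax ∧
          p.2.2 ∈ Set.Ioo (-η₁) η₁ ∧ gstar p = 0}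
        = {p : (Fin n → ℝ) × (Fin m → ℝ) × ℝ |
            p.1 ∈ Z ∧ p.2.2 ∈ Set.Ioo (-η₁) η₁ ∧ p.2.1 = θ (p.1, p.2.2)}) :
    ∀ z ∈ Z, deriv (fun η : ℝ => θ (z, η)) 0 = vpow z γ ∧ (∀ i, 0 < vpow z γ i) := by

  obtain ⟨U, hUo, hUsub, hC2⟩ := hθC2
  intro z hz
  set M := α * βhat⁻¹ with hM
  set F : (Fin m → ℝ) → (Fin m → ℝ) :=
    fun y => vpow (z + M.mulVec y) γ *
      vpow (((fun _ => (1:ℝ)) : Fin k → ℝ) - δᵀ.mulVec y) δ with hF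
  have h0Ioo : (0:ℝ) ∈ Set.Ioo (-η₁) η₁ := ⟨by linarith, hη₁⟩
  have hkey : ∀ η ∈ Set.Ioo (-η₁) η₁, θ (z, η) = η • F (θ (z, η)) := by
    intro η hη
    have hmem : ((z, θ (z, η), η) : (Fin n → ℝ) × (Fin m → ℝ) × ℝ) ∈
        {p : (Fin n → ℝ) × (Fin m → ℝ) × ℝ |
            p.1 ∈ Z ∧ p.2.2 ∈ Set.Ioo (-η₁) η₁ ∧ p.2.1 = θ (p.1, p.2.2)} := ⟨hz, hη, rfl⟩
    rw [← hgraph] at hmem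
    have h0 := hmem.2.2.2
    rw [hgstar] at h0
    have := sub_eq_zero.mp h0
    simpa [hF, hM] using this
  have hF0 : F 0 = vpow z γ := by
    funext i
    simp [hF, vpow, Matrix.mulVec_zero, Real.one_rpow]
  have hpos : ∀ i, 0 < vpow z γ i := fun i =>
    Finset.prod_pos fun j _ => Real.rpow_pos_of_pos (hZpos z hz j) _
  have hmemU : ((z, (0:ℝ))) ∈ U := hUsub ⟨hz, h0Ioo⟩
  have hθcont : ContinuousAt θ (z, 0) :=
    hC2.continuousOn.continuousAt (hUo.mem_nhds hmemU)
  have hh : ContinuousAt (fun η : ℝ => θ (z, η)) 0 :=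
    hθcont.comp (Continuous.continuousAt (by continuity))
  have hh0 : θ (z, (0:ℝ)) = 0 := hθ0 z hz
  have hcontM : ∀ j, Continuous (fun y : Fin m → ℝ => (M *ᵥ y) j) := by
    intro j
    simp only [Matrix.mulVec, dotProduct]
    exact continuous_finset_sum _ fun l _ => continuous_const.mul (continuous_apply l)
  have hcontD : ∀ j, Continuous (fun y : Fin m → ℝ => (δᵀ *ᵥ y) j) := by
    intro j
    simp only [Matrix.mulVec, dotProduct]
    exact continuous_finset_sum _ fun l _ => continuous_const.mul (continuous_apply l)
  have hFcont : ContinuousAt F 0 := by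
    apply continuousAt_pi.mpr
    intro i
    simp only [hF, vpow, Pi.mul_apply, Pi.add_apply, Pi.sub_apply]
    apply ContinuousAt.mul
    · exact tendsto_finset_prod _ fun j _ =>
        ContinuousAt.rpow_const ((continuous_const.add (hcontM j)).continuousAt)
          (Or.inl (by simp [Matrix.mulVec_zero]; exact ne_of_gt (hZpos z hz j)))
    · exact tendsto_finset_prod _ fun j _ =>
        ContinuousAt.rpow_const ((continuous_const.sub (hcontD j)).continuousAt)
          (Or.inl (by simp [Matrix.mulVec_zero]))
  have hder : HasDerivAt (fun η : ℝ => θ (z, η)) (vpow z γ) 0 := by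
    rw [hasDerivAt_iff_tendsto_slope]
    have hev : ∀ᶠ η in nhdsWithin (0:ℝ) {(0:ℝ)}ᶜ,
        slope (fun η : ℝ => θ (z, η)) 0 η = F (θ (z, η)) := by
      filter_upwards [self_mem_nhdsWithin,
        mem_nhdsWithin_of_mem_nhds (Ioo_mem_nhds h0Ioo.1 h0Ioo.2)] with η hne hη
      have hne' : η ≠ 0 := hne
      rw [slope_def_module, hh0, sub_zero, sub_zero]
      conv_lhs => rw [hkey η hη]
      rw [smul_smul, inv_mul_cancel₀ hne', one_smul]
    have htend : Filter.Tendsto (fun η : ℝ => F (θ (z, η)))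
        (nhdsWithin (0:ℝ) {(0:ℝ)}ᶜ) (nhds (vpow z γ)) := by
      have h1 : Filter.Tendsto (fun η : ℝ => θ (z, η)) (nhds 0) (nhds 0) := by
        have := hh.tendsto; rwa [hh0] at this
      have h2 := hFcont.tendsto.comp h1
      rw [hF0] at h2
      exact h2.mono_left nhdsWithin_le_nhds
    exact htend.congr' (Filter.EventuallyEq.symm hev)
  exact ⟨hder.deriv, hpos⟩
end
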